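/- Let U and V be random variables on a probability space (W, 𝔐, Pr) with values in the three-element set 3 = {0, 1, ⊥}. Then U and V are independent if and only if the following four equalities hold, where an equality of expressions involving division is understood to hold also in the case when both of its sides are undefined (i.e., involve division by zero), and to fail if exactly one side is undefined: (1) Pr(U=1 ∧ V=1)/Pr(U≠⊥ ∧ V≠⊥) = (Pr(U=1)/Pr(U≠⊥)) · (Pr(V=1)/Pr(V≠⊥)); (2) Pr(U=1 ∧ V≠⊥)/Pr(U≠⊥) = (Pr(U=1)/Pr(U≠⊥)) · Pr(V≠⊥); (3) Pr(U≠⊥ ∧ V=1)/Pr(V≠⊥) = Pr(U≠⊥) · (Pr(V=1)/Pr(V≠⊥)); (4) Pr(U≠⊥ ∧ V≠⊥) = Pr(U≠⊥) · Pr(V≠⊥). -/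

import Mathlib

open MeasureTheory

/-- The three truth values `0`, `1`, `⊥`. -/
inductive Tri : Type
  | zero : Tri
  | one : Tri
  | bot : Tri
deriving DecidableEq

instance : MeasurableSpace Tri := ⊤

/-- An equality between two possibly undefined quotient expressions: it holds when
both sides are defined and equal, or when both sides are undefined; it fails when
exactly one side is undefined. `dl`/`dr` state that the left/right side is defined
and `l`/`r` are the values. -/
def CondEq (dl dr : Prop) (l r : ENNReal) : Prop :=
  (dl ∧ dr ∧ l = r) ∨ (¬dl ∧ ¬dr)

private lemma ennreal_div_mul (a p q : ENNReal) : a / p * q = a * q / p := by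
  simp only [div_eq_mul_inv]; exact mul_right_comm a p⁻¹ q

private lemma ennreal_div_mul_div (a b p q : ENNReal) (hp : p ≠ 0) (hp' : p ≠ ⊤) :
    a / p * (b / q) = a * b / (p * q) := by
  simp only [div_eq_mul_inv, ENNReal.mul_inv (Or.inl hp) (Or.inl hp')]
  exact mul_mul_mul_comm a p⁻¹ b q⁻¹

private lemma ennreal_div_cancel {a b p : ENNReal} (h0 : p ≠ 0) (ht : p ≠ ⊤)
    (h : a / p = b / p) : a = b := by
  have := congrArg (· * p) h
  simpa [ENNReal.div_mul_cancel h0 ht] using this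

/-- Two `3`-valued random variables `U`, `V` are independent iff the
four equalities of conditional probabilities hold:
(1) `Pr(U=1 ∧ V=1)/Pr(U≠⊥ ∧ V≠⊥) = (Pr(U=1)/Pr(U≠⊥))·(Pr(V=1)/Pr(V≠⊥))`,
(2) `Pr(U=1 ∧ V≠⊥)/Pr(U≠⊥) = (Pr(U=1)/Pr(U≠⊥))·Pr(V≠⊥)`,
(3) `Pr(U≠⊥ ∧ V=1)/Pr(V≠⊥) = Pr(U≠⊥)·(Pr(V=1)/Pr(V≠⊥))`,
(4) `Pr(U≠⊥ ∧ V≠⊥) = Pr(U≠⊥)·Pr(V≠⊥)`,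
each equality understood to hold also when both of its sides are undefined
(involve division by zero) and to fail when exactly one side is. -/
theorem indep_iff_four_equalities
    {W : Type*} [MeasurableSpace W] (P : Measure W) [IsProbabilityMeasure P]
    (U V : W → Tri) (hU : Measurable U) (hV : Measurable V) :
    (∀ x y : Tri,
        P {w | U w = x ∧ V w = y} = P {w | U w = x} * P {w | V w = y}) ↔
      (CondEq (P {w | U w ≠ Tri.bot ∧ V w ≠ Tri.bot} ≠ 0)
          (P {w | U w ≠ Tri.bot} ≠ 0 ∧ P {w | V w ≠ Tri.bot} ≠ 0)
          (P {w | U w = Tri.one ∧ V w = Tri.one} /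
            P {w | U w ≠ Tri.bot ∧ V w ≠ Tri.bot})
          ((P {w | U w = Tri.one} / P {w | U w ≠ Tri.bot}) *
            (P {w | V w = Tri.one} / P {w | V w ≠ Tri.bot})) ∧
        CondEq (P {w | U w ≠ Tri.bot} ≠ 0) (P {w | U w ≠ Tri.bot} ≠ 0)
          (P {w | U w = Tri.one ∧ V w ≠ Tri.bot} / P {w | U w ≠ Tri.bot})
          ((P {w | U w = Tri.one} / P {w | U w ≠ Tri.bot}) *
            P {w | V w ≠ Tri.bot}) ∧
        CondEq (P {w | V w ≠ Tri.bot} ≠ 0) (P {w | V w ≠ Tri.bot} ≠ 0)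
          (P {w | U w ≠ Tri.bot ∧ V w = Tri.one} / P {w | V w ≠ Tri.bot})
          (P {w | U w ≠ Tri.bot} *
            (P {w | V w = Tri.one} / P {w | V w ≠ Tri.bot})) ∧
        P {w | U w ≠ Tri.bot ∧ V w ≠ Tri.bot} =
          P {w | U w ≠ Tri.bot} * P {w | V w ≠ Tri.bot}) := by
  -- measurability of all relevant sets
  have hm : ∀ x y : Tri, MeasurableSet {w | U w = x ∧ V w = y} := by
    intro x y
    have : {w | U w = x ∧ V w = y} = U ⁻¹' {x} ∩ V ⁻¹' {y} := rfl
    rw [this]; exact (hU trivial).inter (hV trivial)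
  have hmu : ∀ x : Tri, MeasurableSet {w | U w = x} := by
    intro x
    have : {w | U w = x} = U ⁻¹' {x} := rfl
    rw [this]; exact hU trivial
  have hmv : ∀ y : Tri, MeasurableSet {w | V w = y} := by
    intro y
    have : {w | V w = y} = V ⁻¹' {y} := rfl
    rw [this]; exact hV trivial
  have hfin : ∀ s : Set W, P s ≠ ⊤ := fun s => measure_ne_top P s
  -- decompositions
  have dU : ∀ x : Tri, P {w | U w = x} =
      P {w | U w = x ∧ V w = Tri.zero} + P {w | U w = x ∧ V w = Tri.one} +
        P {w | U w = x ∧ V w = Tri.bot} := by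
    intro x
    have hset : {w | U w = x} =
        ({w | U w = x ∧ V w = Tri.zero} ∪ {w | U w = x ∧ V w = Tri.one}) ∪
          {w | U w = x ∧ V w = Tri.bot} := by
      ext w; cases h : V w <;> simp [h]
    rw [hset, measure_union ?_ (hm x Tri.bot), measure_union ?_ (hm x Tri.one)]
    · rw [Set.disjoint_left]; rintro w ⟨_, h1⟩ ⟨_, h2⟩; simp_all
    · rw [Set.disjoint_left]; rintro w (⟨_, h1⟩ | ⟨_, h1⟩) ⟨_, h2⟩ <;> simp_all
  have dV : ∀ y : Tri, P {w | V w = y} =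
      P {w | U w = Tri.zero ∧ V w = y} + P {w | U w = Tri.one ∧ V w = y} +
        P {w | U w = Tri.bot ∧ V w = y} := by
    intro y
    have hset : {w | V w = y} =
        ({w | U w = Tri.zero ∧ V w = y} ∪ {w | U w = Tri.one ∧ V w = y}) ∪
          {w | U w = Tri.bot ∧ V w = y} := by
      ext w; cases h : U w <;> simp [h]
    rw [hset, measure_union ?_ (hm Tri.bot y), measure_union ?_ (hm Tri.one y)]
    · rw [Set.disjoint_left]; rintro w ⟨h1, _⟩ ⟨h2, _⟩; simp_all
    · rw [Set.disjoint_left]; rintro w (⟨h1, _⟩ | ⟨h1, _⟩) ⟨h2, _⟩ <;> simp_all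
  have dUn : P {w | U w ≠ Tri.bot} = P {w | U w = Tri.zero} + P {w | U w = Tri.one} := by
    have hset : {w | U w ≠ Tri.bot} = {w | U w = Tri.zero} ∪ {w | U w = Tri.one} := by
      ext w; cases h : U w <;> simp [h]
    rw [hset, measure_union ?_ (hmu Tri.one)]
    rw [Set.disjoint_left]; rintro w h1 h2; simp_all
  have dVn : P {w | V w ≠ Tri.bot} = P {w | V w = Tri.zero} + P {w | V w = Tri.one} := by
    have hset : {w | V w ≠ Tri.bot} = {w | V w = Tri.zero} ∪ {w | V w = Tri.one} := by
      ext w; cases h : V w <;> simp [h]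
    rw [hset, measure_union ?_ (hmv Tri.one)]
    rw [Set.disjoint_left]; rintro w h1 h2; simp_all
  have dA : P {w | U w = Tri.one ∧ V w ≠ Tri.bot} =
      P {w | U w = Tri.one ∧ V w = Tri.zero} + P {w | U w = Tri.one ∧ V w = Tri.one} := by
    have hset : {w | U w = Tri.one ∧ V w ≠ Tri.bot} =
        {w | U w = Tri.one ∧ V w = Tri.zero} ∪ {w | U w = Tri.one ∧ V w = Tri.one} := by
      ext w; cases h : V w <;> simp [h]
    rw [hset, measure_union ?_ (hm Tri.one Tri.one)]
    rw [Set.disjoint_left]; rintro w ⟨_, h1⟩ ⟨_, h2⟩; simp_all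
  have dB : P {w | U w ≠ Tri.bot ∧ V w = Tri.one} =
      P {w | U w = Tri.zero ∧ V w = Tri.one} + P {w | U w = Tri.one ∧ V w = Tri.one} := by
    have hset : {w | U w ≠ Tri.bot ∧ V w = Tri.one} =
        {w | U w = Tri.zero ∧ V w = Tri.one} ∪ {w | U w = Tri.one ∧ V w = Tri.one} := by
      ext w; cases h : U w <;> simp [h]
    rw [hset, measure_union ?_ (hm Tri.one Tri.one)]
    rw [Set.disjoint_left]; rintro w ⟨h1, _⟩ ⟨h2, _⟩; simp_all
  have dS : P {w | U w ≠ Tri.bot ∧ V w ≠ Tri.bot} =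
      P {w | U w = Tri.zero ∧ V w = Tri.zero} + P {w | U w = Tri.zero ∧ V w = Tri.one} +
        P {w | U w = Tri.one ∧ V w = Tri.zero} + P {w | U w = Tri.one ∧ V w = Tri.one} := by
    have hset : {w | U w ≠ Tri.bot ∧ V w ≠ Tri.bot} =
        (({w | U w = Tri.zero ∧ V w = Tri.zero} ∪ {w | U w = Tri.zero ∧ V w = Tri.one}) ∪
          {w | U w = Tri.one ∧ V w = Tri.zero}) ∪ {w | U w = Tri.one ∧ V w = Tri.one} := by
      ext w; cases h1 : U w <;> cases h2 : V w <;> simp [h1, h2]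
    rw [hset, measure_union ?_ (hm Tri.one Tri.one), measure_union ?_ (hm Tri.one Tri.zero),
      measure_union ?_ (hm Tri.zero Tri.one)]
    · rw [Set.disjoint_left]; rintro w ⟨_, h1⟩ ⟨_, h2⟩; simp_all
    · rw [Set.disjoint_left]; rintro w (⟨h1, _⟩ | ⟨h1, _⟩) ⟨h2, _⟩ <;> simp_all
    · rw [Set.disjoint_left]
      rintro w ((⟨_, h1⟩ | ⟨_, h1⟩) | ⟨_, h1⟩) ⟨_, h2⟩ <;> simp_all
  have tV : P {w | V w = Tri.zero} + P {w | V w = Tri.one} + P {w | V w = Tri.bot} = 1 := by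
    have hset : (Set.univ : Set W) =
        ({w | V w = Tri.zero} ∪ {w | V w = Tri.one}) ∪ {w | V w = Tri.bot} := by
      ext w; cases h : V w <;> simp [h]
    have := measure_univ (μ := P)
    rw [hset, measure_union ?_ (hmv Tri.bot), measure_union ?_ (hmv Tri.one)] at this
    · exact this
    · rw [Set.disjoint_left]; rintro w h1 h2; simp_all
    · rw [Set.disjoint_left]; rintro w (h1 | h1) h2 <;> simp_all
  have tU : P {w | U w = Tri.zero} + P {w | U w = Tri.one} + P {w | U w = Tri.bot} = 1 := by
    have hset : (Set.univ : Set W) =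
        ({w | U w = Tri.zero} ∪ {w | U w = Tri.one}) ∪ {w | U w = Tri.bot} := by
      ext w; cases h : U w <;> simp [h]
    have := measure_univ (μ := P)
    rw [hset, measure_union ?_ (hmu Tri.bot), measure_union ?_ (hmu Tri.one)] at this
    · exact this
    · rw [Set.disjoint_left]; rintro w h1 h2; simp_all
    · rw [Set.disjoint_left]; rintro w (h1 | h1) h2 <;> simp_all
  constructor
  · -- forward direction
    intro h
    have hs : P {w | U w ≠ Tri.bot ∧ V w ≠ Tri.bot} =
        P {w | U w ≠ Tri.bot} * P {w | V w ≠ Tri.bot} := by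
      rw [dS, dUn, dVn, h Tri.zero Tri.zero, h Tri.zero Tri.one, h Tri.one Tri.zero,
        h Tri.one Tri.one]; ring
    have hA : P {w | U w = Tri.one ∧ V w ≠ Tri.bot} =
        P {w | U w = Tri.one} * P {w | V w ≠ Tri.bot} := by
      rw [dA, dVn, h Tri.one Tri.zero, h Tri.one Tri.one]; ring
    have hB : P {w | U w ≠ Tri.bot ∧ V w = Tri.one} =
        P {w | U w ≠ Tri.bot} * P {w | V w = Tri.one} := by
      rw [dB, dUn, h Tri.zero Tri.one, h Tri.one Tri.one]; ring
    refine ⟨?_, ?_, ?_, hs⟩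
    · by_cases hp : P {w | U w ≠ Tri.bot} = 0
      · right
        constructor
        · simp [hs, hp]
        · tauto
      · by_cases hq : P {w | V w ≠ Tri.bot} = 0
        · right
          constructor
          · simp [hs, hq]
          · tauto
        · left
          refine ⟨by rw [hs]; exact mul_ne_zero hp hq, ⟨hp, hq⟩, ?_⟩
          rw [hs, h Tri.one Tri.one, ennreal_div_mul_div _ _ _ _ hp (hfin _)]
    · by_cases hp : P {w | U w ≠ Tri.bot} = 0
      · right; exact ⟨not_not_intro hp, not_not_intro hp⟩
      · left
        refine ⟨hp, hp, ?_⟩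
        rw [hA, ennreal_div_mul]
    · by_cases hq : P {w | V w ≠ Tri.bot} = 0
      · right; exact ⟨not_not_intro hq, not_not_intro hq⟩
      · left
        refine ⟨hq, hq, ?_⟩
        rw [hB]; simp only [div_eq_mul_inv]; ring
  · -- backward direction
    rintro ⟨E1, E2, E3, E4⟩
    have cancel : ∀ a b c : ENNReal, b ≠ ⊤ → a + b = c + b → a = c :=
      fun a b c hb hh => WithTop.add_right_cancel hb hh
    -- p₁ ≤ p, q₁ ≤ q etc.
    have hp1p : P {w | U w = Tri.one} ≤ P {w | U w ≠ Tri.bot} :=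
      measure_mono (by intro w hw; simp only [Set.mem_setOf_eq] at *; rw [hw]; simp)
    have hq1q : P {w | V w = Tri.one} ≤ P {w | V w ≠ Tri.bot} :=
      measure_mono (by intro w hw; simp only [Set.mem_setOf_eq] at *; rw [hw]; simp)
    have hAle : P {w | U w = Tri.one ∧ V w ≠ Tri.bot} ≤ P {w | U w = Tri.one} :=
      measure_mono fun w hw => hw.1
    have hBle : P {w | U w ≠ Tri.bot ∧ V w = Tri.one} ≤ P {w | V w = Tri.one} :=
      measure_mono fun w hw => hw.2
    have h11le : P {w | U w = Tri.one ∧ V w = Tri.one} ≤ P {w | U w = Tri.one} :=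
      measure_mono fun w hw => hw.1
    -- (2) ⟹ hA'
    have hA' : P {w | U w = Tri.one ∧ V w ≠ Tri.bot} =
        P {w | U w = Tri.one} * P {w | V w ≠ Tri.bot} := by
      by_cases hp : P {w | U w ≠ Tri.bot} = 0
      · have h1 : P {w | U w = Tri.one} = 0 := le_antisymm (hp ▸ hp1p) zero_le
        have h2 : P {w | U w = Tri.one ∧ V w ≠ Tri.bot} = 0 :=
          le_antisymm (h1 ▸ hAle) zero_le
        simp [h1, h2]
      · rcases E2 with ⟨_, _, heq⟩ | ⟨hnd, _⟩
        · rw [ennreal_div_mul] at heq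
          exact ennreal_div_cancel hp (hfin _) heq
        · exact absurd hp hnd
    -- (3) ⟹ hB'
    have hB' : P {w | U w ≠ Tri.bot ∧ V w = Tri.one} =
        P {w | U w ≠ Tri.bot} * P {w | V w = Tri.one} := by
      by_cases hq : P {w | V w ≠ Tri.bot} = 0
      · have h1 : P {w | V w = Tri.one} = 0 := le_antisymm (hq ▸ hq1q) zero_le
        have h2 : P {w | U w ≠ Tri.bot ∧ V w = Tri.one} = 0 :=
          le_antisymm (h1 ▸ hBle) zero_le
        simp [h1, h2]
      · rcases E3 with ⟨_, _, heq⟩ | ⟨hnd, _⟩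
        · rw [mul_comm (P {w | U w ≠ Tri.bot}), ennreal_div_mul] at heq
          rw [mul_comm (P {w | U w ≠ Tri.bot})]
          exact ennreal_div_cancel hq (hfin _) heq
        · exact absurd hq hnd
    -- (1) ⟹ h11
    have h11 : P {w | U w = Tri.one ∧ V w = Tri.one} =
        P {w | U w = Tri.one} * P {w | V w = Tri.one} := by
      by_cases hp : P {w | U w ≠ Tri.bot} = 0
      · have h1 : P {w | U w = Tri.one} = 0 := le_antisymm (hp ▸ hp1p) zero_le
        have h2 : P {w | U w = Tri.one ∧ V w = Tri.one} = 0 :=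
          le_antisymm (h1 ▸ h11le) zero_le
        simp [h1, h2]
      · by_cases hq : P {w | V w ≠ Tri.bot} = 0
        · have h1 : P {w | V w = Tri.one} = 0 := le_antisymm (hq ▸ hq1q) zero_le
          have h2 : P {w | U w = Tri.one ∧ V w = Tri.one} = 0 := by
            have : P {w | U w = Tri.one ∧ V w = Tri.one} ≤ P {w | V w = Tri.one} :=
              measure_mono fun w hw => hw.2
            exact le_antisymm (h1 ▸ this) zero_le
          simp [h1, h2]
        · rcases E1 with ⟨_, _, heq⟩ | ⟨_, hnd⟩
          · rw [ennreal_div_mul_div _ _ _ _ hp (hfin _), ← E4] at heq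
            have hs0 : P {w | U w ≠ Tri.bot ∧ V w ≠ Tri.bot} ≠ 0 := by
              rw [E4]; exact mul_ne_zero hp hq
            exact ennreal_div_cancel hs0 (hfin _) heq
          · exact absurd ⟨hp, hq⟩ hnd
    -- now derive all nine equalities
    -- abbreviations in comments: pz po pb qz qo qb, r x y
    have roz : P {w | U w = Tri.one ∧ V w = Tri.zero} =
        P {w | U w = Tri.one} * P {w | V w = Tri.zero} := by
      have e : P {w | U w = Tri.one ∧ V w = Tri.zero} + P {w | U w = Tri.one ∧ V w = Tri.one} =
          P {w | U w = Tri.one} * P {w | V w = Tri.zero} +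
            P {w | U w = Tri.one ∧ V w = Tri.one} := by
        rw [← dA, hA', dVn, h11]; ring
      exact cancel _ _ _ (hfin _) e
    have rzo : P {w | U w = Tri.zero ∧ V w = Tri.one} =
        P {w | U w = Tri.zero} * P {w | V w = Tri.one} := by
      have e : P {w | U w = Tri.zero ∧ V w = Tri.one} + P {w | U w = Tri.one ∧ V w = Tri.one} =
          P {w | U w = Tri.zero} * P {w | V w = Tri.one} +
            P {w | U w = Tri.one ∧ V w = Tri.one} := by
        rw [← dB, hB', dUn, h11]; ring
      exact cancel _ _ _ (hfin _) e
    have rzz : P {w | U w = Tri.zero ∧ V w = Tri.zero} =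
        P {w | U w = Tri.zero} * P {w | V w = Tri.zero} := by
      have e : P {w | U w = Tri.zero ∧ V w = Tri.zero} +
          (P {w | U w = Tri.zero} * P {w | V w = Tri.one} +
            P {w | U w = Tri.one} * P {w | V w = Tri.zero} +
            P {w | U w = Tri.one} * P {w | V w = Tri.one}) =
          P {w | U w = Tri.zero} * P {w | V w = Tri.zero} +
          (P {w | U w = Tri.zero} * P {w | V w = Tri.one} +
            P {w | U w = Tri.one} * P {w | V w = Tri.zero} +
            P {w | U w = Tri.one} * P {w | V w = Tri.one}) := by
        calc P {w | U w = Tri.zero ∧ V w = Tri.zero} +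
              (P {w | U w = Tri.zero} * P {w | V w = Tri.one} +
                P {w | U w = Tri.one} * P {w | V w = Tri.zero} +
                P {w | U w = Tri.one} * P {w | V w = Tri.one})
            = P {w | U w = Tri.zero ∧ V w = Tri.zero} + P {w | U w = Tri.zero ∧ V w = Tri.one} +
              P {w | U w = Tri.one ∧ V w = Tri.zero} + P {w | U w = Tri.one ∧ V w = Tri.one} := by
              rw [rzo, roz, h11]; ring
          _ = P {w | U w ≠ Tri.bot} * P {w | V w ≠ Tri.bot} := by rw [← dS]; exact E4
          _ = _ := by rw [dUn, dVn]; ring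
      refine cancel _ _ _ ?_ e
      exact ENNReal.add_ne_top.2 ⟨ENNReal.add_ne_top.2
        ⟨ENNReal.mul_ne_top (hfin _) (hfin _), ENNReal.mul_ne_top (hfin _) (hfin _)⟩,
        ENNReal.mul_ne_top (hfin _) (hfin _)⟩
    have rob : P {w | U w = Tri.one ∧ V w = Tri.bot} =
        P {w | U w = Tri.one} * P {w | V w = Tri.bot} := by
      have e : P {w | U w = Tri.one ∧ V w = Tri.bot} +
          (P {w | U w = Tri.one} * P {w | V w = Tri.zero} +
            P {w | U w = Tri.one} * P {w | V w = Tri.one}) =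
          P {w | U w = Tri.one} * P {w | V w = Tri.bot} +
          (P {w | U w = Tri.one} * P {w | V w = Tri.zero} +
            P {w | U w = Tri.one} * P {w | V w = Tri.one}) := by
        calc P {w | U w = Tri.one ∧ V w = Tri.bot} +
              (P {w | U w = Tri.one} * P {w | V w = Tri.zero} +
                P {w | U w = Tri.one} * P {w | V w = Tri.one})
            = P {w | U w = Tri.one ∧ V w = Tri.zero} + P {w | U w = Tri.one ∧ V w = Tri.one} +
              P {w | U w = Tri.one ∧ V w = Tri.bot} := by rw [roz, h11]; ring
          _ = P {w | U w = Tri.one} := (dU Tri.one).symm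
          _ = P {w | U w = Tri.one} *
              (P {w | V w = Tri.zero} + P {w | V w = Tri.one} + P {w | V w = Tri.bot}) := by
              rw [tV, mul_one]
          _ = _ := by ring
      refine cancel _ _ _ ?_ e
      exact ENNReal.add_ne_top.2
        ⟨ENNReal.mul_ne_top (hfin _) (hfin _), ENNReal.mul_ne_top (hfin _) (hfin _)⟩
    have rzb : P {w | U w = Tri.zero ∧ V w = Tri.bot} =
        P {w | U w = Tri.zero} * P {w | V w = Tri.bot} := by
      have e : P {w | U w = Tri.zero ∧ V w = Tri.bot} +
          (P {w | U w = Tri.zero} * P {w | V w = Tri.zero} +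
            P {w | U w = Tri.zero} * P {w | V w = Tri.one}) =
          P {w | U w = Tri.zero} * P {w | V w = Tri.bot} +
          (P {w | U w = Tri.zero} * P {w | V w = Tri.zero} +
            P {w | U w = Tri.zero} * P {w | V w = Tri.one}) := by
        calc P {w | U w = Tri.zero ∧ V w = Tri.bot} +
              (P {w | U w = Tri.zero} * P {w | V w = Tri.zero} +
                P {w | U w = Tri.zero} * P {w | V w = Tri.one})
            = P {w | U w = Tri.zero ∧ V w = Tri.zero} + P {w | U w = Tri.zero ∧ V w = Tri.one} +
              P {w | U w = Tri.zero ∧ V w = Tri.bot} := by rw [rzz, rzo]; ring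
          _ = P {w | U w = Tri.zero} := (dU Tri.zero).symm
          _ = P {w | U w = Tri.zero} *
              (P {w | V w = Tri.zero} + P {w | V w = Tri.one} + P {w | V w = Tri.bot}) := by
              rw [tV, mul_one]
          _ = _ := by ring
      refine cancel _ _ _ ?_ e
      exact ENNReal.add_ne_top.2
        ⟨ENNReal.mul_ne_top (hfin _) (hfin _), ENNReal.mul_ne_top (hfin _) (hfin _)⟩
    have rbz : P {w | U w = Tri.bot ∧ V w = Tri.zero} =
        P {w | U w = Tri.bot} * P {w | V w = Tri.zero} := by
      have e : P {w | U w = Tri.bot ∧ V w = Tri.zero} +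
          (P {w | U w = Tri.zero} * P {w | V w = Tri.zero} +
            P {w | U w = Tri.one} * P {w | V w = Tri.zero}) =
          P {w | U w = Tri.bot} * P {w | V w = Tri.zero} +
          (P {w | U w = Tri.zero} * P {w | V w = Tri.zero} +
            P {w | U w = Tri.one} * P {w | V w = Tri.zero}) := by
        calc P {w | U w = Tri.bot ∧ V w = Tri.zero} +
              (P {w | U w = Tri.zero} * P {w | V w = Tri.zero} +
                P {w | U w = Tri.one} * P {w | V w = Tri.zero})
            = P {w | U w = Tri.zero ∧ V w = Tri.zero} + P {w | U w = Tri.one ∧ V w = Tri.zero} +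
              P {w | U w = Tri.bot ∧ V w = Tri.zero} := by rw [rzz, roz]; ring
          _ = P {w | V w = Tri.zero} := (dV Tri.zero).symm
          _ = (P {w | U w = Tri.zero} + P {w | U w = Tri.one} + P {w | U w = Tri.bot}) *
              P {w | V w = Tri.zero} := by rw [tU, one_mul]
          _ = _ := by ring
      refine cancel _ _ _ ?_ e
      exact ENNReal.add_ne_top.2
        ⟨ENNReal.mul_ne_top (hfin _) (hfin _), ENNReal.mul_ne_top (hfin _) (hfin _)⟩
    have rbo : P {w | U w = Tri.bot ∧ V w = Tri.one} =
        P {w | U w = Tri.bot} * P {w | V w = Tri.one} := by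
      have e : P {w | U w = Tri.bot ∧ V w = Tri.one} +
          (P {w | U w = Tri.zero} * P {w | V w = Tri.one} +
            P {w | U w = Tri.one} * P {w | V w = Tri.one}) =
          P {w | U w = Tri.bot} * P {w | V w = Tri.one} +
          (P {w | U w = Tri.zero} * P {w | V w = Tri.one} +
            P {w | U w = Tri.one} * P {w | V w = Tri.one}) := by
        calc P {w | U w = Tri.bot ∧ V w = Tri.one} +
              (P {w | U w = Tri.zero} * P {w | V w = Tri.one} +
                P {w | U w = Tri.one} * P {w | V w = Tri.one})
            = P {w | U w = Tri.zero ∧ V w = Tri.one} + P {w | U w = Tri.one ∧ V w = Tri.one} +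
              P {w | U w = Tri.bot ∧ V w = Tri.one} := by rw [rzo, h11]; ring
          _ = P {w | V w = Tri.one} := (dV Tri.one).symm
          _ = (P {w | U w = Tri.zero} + P {w | U w = Tri.one} + P {w | U w = Tri.bot}) *
              P {w | V w = Tri.one} := by rw [tU, one_mul]
          _ = _ := by ring
      refine cancel _ _ _ ?_ e
      exact ENNReal.add_ne_top.2
        ⟨ENNReal.mul_ne_top (hfin _) (hfin _), ENNReal.mul_ne_top (hfin _) (hfin _)⟩
    have rbb : P {w | U w = Tri.bot ∧ V w = Tri.bot} =
        P {w | U w = Tri.bot} * P {w | V w = Tri.bot} := by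
      have e : P {w | U w = Tri.bot ∧ V w = Tri.bot} +
          (P {w | U w = Tri.bot} * P {w | V w = Tri.zero} +
            P {w | U w = Tri.bot} * P {w | V w = Tri.one}) =
          P {w | U w = Tri.bot} * P {w | V w = Tri.bot} +
          (P {w | U w = Tri.bot} * P {w | V w = Tri.zero} +
            P {w | U w = Tri.bot} * P {w | V w = Tri.one}) := by
        calc P {w | U w = Tri.bot ∧ V w = Tri.bot} +
              (P {w | U w = Tri.bot} * P {w | V w = Tri.zero} +
                P {w | U w = Tri.bot} * P {w | V w = Tri.one})
            = P {w | U w = Tri.bot ∧ V w = Tri.zero} + P {w | U w = Tri.bot ∧ V w = Tri.one} +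
              P {w | U w = Tri.bot ∧ V w = Tri.bot} := by rw [rbz, rbo]; ring
          _ = P {w | U w = Tri.bot} := (dU Tri.bot).symm
          _ = P {w | U w = Tri.bot} *
              (P {w | V w = Tri.zero} + P {w | V w = Tri.one} + P {w | V w = Tri.bot}) := by
              rw [tV, mul_one]
          _ = _ := by ring
      refine cancel _ _ _ ?_ e
      exact ENNReal.add_ne_top.2
        ⟨ENNReal.mul_ne_top (hfin _) (hfin _), ENNReal.mul_ne_top (hfin _) (hfin _)⟩
    intro x y
    cases x <;> cases y <;> assumption
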